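/- arXiv:2409.03279 — 5 statements merged into one kernel-verified Lean document; each statement's English description precedes it below -/
import Mathlib

section
/- Let S₁, S₂ be involutions on a vector space W with projections Πᵢ^± = (1 ± Sᵢ)/2 and Zᵢ^± = Ran(Πᵢ^±), and suppose Υ = (1/4)(S₁+S₂)² is invertible. Then Λ₁₂⁺ := Π₁⁺ Υ⁻¹ Π₂⁺ is a projection (idempotent) with range Z₁⁺ and kernel Z₂⁻; in particular, Z₁⁺ and Z₂⁻ are complementary subspaces of W. -/
lemma juggle {R : Type*} [Ring R] (a b v t : R)
    (hva : v * a = a * v) (hvb : v * b = b * v)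
    (htv : t * v = 1)
    (hbab : b * (a * b) = t * b) (haba : a * (b * a) = t * a) :
    b * (a * v * b) = b ∧ (a * v * b) * a = a ∧ (a * v * b) * (a * v * b) = a * v * b := by
  have hB : b * (a * v * b) = b := by
    calc b * (a * v * b) = b * (a * (b * v)) := by rw [← hvb]; noncomm_ring
    _ = (b * (a * b)) * v := by noncomm_ring
    _ = t * (v * b) := by rw [hbab, hvb]; noncomm_ring
    _ = b := by rw [← mul_assoc, htv, one_mul]
  have hC : (a * v * b) * a = a := by
    have hvba : v * (b * a) = (b * a) * v := by
      rw [← mul_assoc, hvb, mul_assoc, hva, ← mul_assoc]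
    calc (a * v * b) * a = a * (v * (b * a)) := by noncomm_ring
    _ = (a * (b * a)) * v := by rw [hvba]; noncomm_ring
    _ = t * (a * v) := by rw [haba]; noncomm_ring
    _ = (t * v) * a := by rw [mul_assoc, ← hva, ← mul_assoc]
    _ = a := by rw [htv, one_mul]
  refine ⟨hB, hC, ?_⟩
  calc (a * v * b) * (a * v * b) = a * v * (b * (a * v * b)) := by noncomm_ring
  _ = a * v * b := by rw [hB]

/-- The Kato projection Λ₁₂⁺ = Π₁⁺ Υ⁻¹ Π₂⁺ projects onto Z₁⁺ along Z₂⁻. -/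
theorem stmt3 {W : Type*} [AddCommGroup W] [Module ℂ W]
    (S₁ S₂ : Module.End ℂ W) (h₁ : S₁ ^ 2 = 1) (h₂ : S₂ ^ 2 = 1)
    (Υinv : Module.End ℂ W)
    (hΥ₁ : ((4⁻¹ : ℂ) • (S₁ + S₂) ^ 2) * Υinv = 1)
    (hΥ₂ : Υinv * ((4⁻¹ : ℂ) • (S₁ + S₂) ^ 2) = 1) :
    let P1p := (2⁻¹ : ℂ) • (1 + S₁)
    let P2p := (2⁻¹ : ℂ) • (1 + S₂)
    let P2m := (2⁻¹ : ℂ) • (1 - S₂)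
    let Λ := P1p * Υinv * P2p
    Λ * Λ = Λ ∧
    LinearMap.range Λ = LinearMap.range P1p ∧
    LinearMap.ker Λ = LinearMap.range P2m ∧
    IsCompl (LinearMap.range P1p) (LinearMap.range P2m) := by
  intro P1p P2p P2m Λ
  have e1 : S₁ * S₁ = 1 := by rw [← pow_two]; exact h₁
  have e2 : S₂ * S₂ = 1 := by rw [← pow_two]; exact h₂
  have e1' : ∀ x : Module.End ℂ W, S₁ * (S₁ * x) = x := by
    intro x; rw [← mul_assoc, e1, one_mul]
  have e2' : ∀ x : Module.End ℂ W, S₂ * (S₂ * x) = x := by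
    intro x; rw [← mul_assoc, e2, one_mul]
  set T : Module.End ℂ W := (S₁ + S₂)^2 with hTdef
  set V : Module.End ℂ W := (4⁻¹ : ℂ) • Υinv with hVdef
  -- inverse facts
  have htv : T * V = 1 := by
    rw [hVdef, mul_smul_comm, ← smul_mul_assoc]; exact hΥ₁
  have hvt : V * T = 1 := by
    rw [hVdef, smul_mul_assoc, ← mul_smul_comm]; exact hΥ₂
  -- commutation
  have hcomm1 : S₁ * T = T * S₁ := by
    rw [hTdef]
    simp only [pow_two, mul_add, add_mul, mul_assoc, e1, e2, e1', e2', mul_one, one_mul]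
    abel
  have hcomm2 : S₂ * T = T * S₂ := by
    rw [hTdef]
    simp only [pow_two, mul_add, add_mul, mul_assoc, e1, e2, e1', e2', mul_one, one_mul]
    abel
  have hvs1 : V * S₁ = S₁ * V := by
    calc V * S₁ = V * S₁ * (T * V) := by rw [htv, mul_one]
    _ = V * (S₁ * T) * V := by noncomm_ring
    _ = V * (T * S₁) * V := by rw [hcomm1]
    _ = (V * T) * (S₁ * V) := by noncomm_ring
    _ = S₁ * V := by rw [hvt, one_mul]
  have hvs2 : V * S₂ = S₂ * V := by
    calc V * S₂ = V * S₂ * (T * V) := by rw [htv, mul_one]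
    _ = V * (S₂ * T) * V := by noncomm_ring
    _ = V * (T * S₂) * V := by rw [hcomm2]
    _ = (V * T) * (S₂ * V) := by noncomm_ring
    _ = S₂ * V := by rw [hvt, one_mul]
  have hva : V * (1 + S₁) = (1 + S₁) * V := by
    rw [mul_add, add_mul, mul_one, one_mul, hvs1]
  have hvb : V * (1 + S₂) = (1 + S₂) * V := by
    rw [mul_add, add_mul, mul_one, one_mul, hvs2]
  have hbab : (1 + S₂) * ((1 + S₁) * (1 + S₂)) = T * (1 + S₂) := by
    rw [hTdef]
    simp only [pow_two, mul_add, add_mul, mul_assoc, e1, e2, e1', e2', mul_one, one_mul]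
    abel
  have haba : (1 + S₁) * ((1 + S₂) * (1 + S₁)) = T * (1 + S₁) := by
    rw [hTdef]
    simp only [pow_two, mul_add, add_mul, mul_assoc, e1, e2, e1', e2', mul_one, one_mul]
    abel
  obtain ⟨hB, hC, hA⟩ := juggle (1 + S₁) (1 + S₂) V T hva hvb htv hbab haba
  -- Λ in scalar-free form
  have hΛ : Λ = (1 + S₁) * V * (1 + S₂) := by
    show ((2⁻¹ : ℂ) • (1 + S₁)) * Υinv * ((2⁻¹ : ℂ) • (1 + S₂)) = _
    rw [hVdef]
    simp only [smul_mul_assoc, mul_smul_comm, smul_smul]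
    norm_num
  -- the three operator identities
  have hidem : Λ * Λ = Λ := by rw [hΛ]; exact hA
  have hΛP1 : Λ * P1p = P1p := by
    show Λ * ((2⁻¹ : ℂ) • (1 + S₁)) = (2⁻¹ : ℂ) • (1 + S₁)
    rw [mul_smul_comm, hΛ, hC]
  have hP2Λ : P2p * Λ = P2p := by
    show ((2⁻¹ : ℂ) • (1 + S₂)) * Λ = (2⁻¹ : ℂ) • (1 + S₂)
    rw [smul_mul_assoc, hΛ, hB]
  have hz : (1 + S₂) * (1 - S₂) = 0 := by
    simp only [mul_sub, sub_mul, mul_add, add_mul, mul_one, one_mul, e2]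
    abel
  have hΛP2m : Λ * P2m = 0 := by
    show Λ * ((2⁻¹ : ℂ) • (1 - S₂)) = 0
    rw [mul_smul_comm, hΛ, mul_assoc, hz, mul_zero, smul_zero]
  have hsum : P2p + P2m = 1 := by
    show (2⁻¹ : ℂ) • (1 + S₂) + (2⁻¹ : ℂ) • (1 - S₂) = 1
    rw [← smul_add]
    have : (1 + S₂) + (1 - S₂) = (2 : ℂ) • (1 : Module.End ℂ W) := by
      rw [two_smul]; abel
    rw [this, smul_smul]
    norm_num
  -- range
  have hrange : LinearMap.range Λ = LinearMap.range P1p := by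
    apply le_antisymm
    · rintro x ⟨y, rfl⟩
      refine ⟨(Υinv * P2p) y, ?_⟩
      show P1p ((Υinv * P2p) y) = (P1p * Υinv * P2p) y
      rw [mul_assoc]; rfl
    · rintro x ⟨y, rfl⟩
      exact ⟨P1p y, by rw [← Module.End.mul_apply, hΛP1]⟩
  -- kernel
  have hker : LinearMap.ker Λ = LinearMap.range P2m := by
    apply le_antisymm
    · intro x hx
      have hx0 : Λ x = 0 := hx
      have hp : P2p x = 0 := by
        have := congrArg (fun f : Module.End ℂ W => f x) hP2Λ
        simpa [Module.End.mul_apply, hx0] using this.symm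
      refine ⟨x, ?_⟩
      have := congrArg (fun f : Module.End ℂ W => f x) hsum
      simpa [LinearMap.add_apply, hp] using this
    · rintro x ⟨y, rfl⟩
      have := congrArg (fun f : Module.End ℂ W => f y) hΛP2m
      simpa [Module.End.mul_apply] using this
  refine ⟨hidem, hrange, hker, ?_⟩
  rw [← hrange, ← hker]
  constructor
  · rw [disjoint_iff]
    ext x
    simp only [Submodule.mem_inf, Submodule.mem_bot]
    constructor
    · rintro ⟨⟨y, rfl⟩, hk⟩
      have hk' : Λ (Λ y) = 0 := hk
      calc Λ y = (Λ * Λ) y := by rw [hidem]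
      _ = 0 := hk'
    · rintro rfl; exact ⟨⟨0, map_zero _⟩, map_zero _⟩
  · rw [codisjoint_iff_le_sup]
    intro x _
    refine Submodule.mem_sup.mpr ⟨Λ x, ⟨x, rfl⟩, x - Λ x, ?_, by abel⟩
    show Λ (x - Λ x) = 0
    rw [map_sub, ← Module.End.mul_apply, hidem, sub_self]
end

section
/- Let P be an orthogonal projection and S a self-adjoint involution (S = S*, S² = 1) on a Hilbert space, and let 0 < α ≤ 1. Assume PSP ≥ αP and (1−P)S(1−P) ≤ 0. Then (1−P)S(1−P) ≤ −α(1−P). -/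
/-!
Put `q = 1 - p` and `b = p * s * q`. Since `s * s = 1`, `b * b⋆ = p - (p s p)²` and
`b⋆ * b = q - (q s q)²`. The hypothesis `α p ≤ p s p` bounds the first by `1 - α²`, and the
C⋆-identity `‖b * b⋆‖ = ‖b⋆ * b‖` transfers this bound to the second. Compressing by `q` gives
`α² q ≤ (q s q)²`, and as `q s q ≤ 0`, taking square roots spectrally yields `q s q ≤ -α q`.
-/

theorem IsIdempotentElem.mul_one_sub_mul_mul_one_sub_mul {R : Type*} [Ring R] {p s : R}
    (hp : IsIdempotentElem p) (hs : s * s = 1) :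
    p * s * (1 - p) * ((1 - p) * s * p) = p - p * s * p * (p * s * p) := by
  calc p * s * (1 - p) * ((1 - p) * s * p) = p * s * ((1 - p) * (1 - p)) * s * p := by
        noncomm_ring
    _ = p * (s * s) * p - p * s * p * s * p := by rw [hp.one_sub.eq]; noncomm_ring
    _ = p - p * s * (p * p) * s * p := by rw [hs, mul_one, hp.eq]
    _ = p - p * s * p * (p * s * p) := by noncomm_ring

namespace CStarAlgebra

variable {A : Type*} [CStarAlgebra A] [PartialOrder A] [StarOrderedRing A]

theorem star_mul_self_le_algebraMap_of_mul_star_self_le {a : A} {r : ℝ} (hr : 0 ≤ r)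
    (h : a * star a ≤ algebraMap ℝ A r) : star a * a ≤ algebraMap ℝ A r := by
  rw [← norm_le_iff_le_algebraMap _ hr (star_mul_self_nonneg a), CStarRing.norm_star_mul_self,
    ← CStarRing.norm_self_mul_star]
  exact (norm_le_iff_le_algebraMap _ hr (mul_star_self_nonneg a)).mpr h

theorem algebraMap_le_of_algebraMap_sq_le {w : A} (hw : 0 ≤ w) {r : ℝ} (hr : 0 ≤ r)
    (h : algebraMap ℝ A (r ^ 2) ≤ w ^ 2) : algebraMap ℝ A r ≤ w := by
  rw [← cfc_pow_id (R := ℝ) w 2, algebraMap_le_cfc_iff (fun x : ℝ => x ^ 2) (r ^ 2) w] at h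
  rw [algebraMap_le_iff_le_spectrum]
  intro x hx
  have hx0 : 0 ≤ x := spectrum_nonneg_of_nonneg hw hx
  exact (pow_le_pow_iff_left₀ hr hx0 two_ne_zero).mp (h x hx)

end CStarAlgebra

namespace IsStarProjection

variable {A : Type*} [CStarAlgebra A] [PartialOrder A] [StarOrderedRing A] {p x : A} {α : ℝ}

theorem sub_mul_self_le_of_smul_le (hp : IsStarProjection p) (hpx : p * x = x) (hxp : x * p = x)
    (hα0 : 0 ≤ α) (hα1 : α ≤ 1) (h : α • p ≤ x) :
    p - x * x ≤ algebraMap ℝ A (1 - α ^ 2) := by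
  set m := x - α • p with hm
  have hm0 : 0 ≤ m := sub_nonneg.mpr h
  have hpm : p * m = m := by rw [hm, mul_sub, hpx, mul_smul_comm, hp.isIdempotentElem.eq]
  have hmp : m * p = m := by rw [hm, sub_mul, hxp, smul_mul_assoc, hp.isIdempotentElem.eq]
  have hmm : 0 ≤ m * m := by simpa [hm0.isSelfAdjoint.star_eq] using star_mul_self_nonneg m
  have hx : x = m + α • p := by rw [hm, sub_add_cancel]
  have key : algebraMap ℝ A (1 - α ^ 2) - (p - x * x) =
      m * m + (2 * α) • m + (1 - α ^ 2) • (1 - p) := by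
    rw [Algebra.algebraMap_eq_smul_one, hx]
    simp only [add_mul, mul_add, smul_mul_assoc, mul_smul_comm, hpm, hmp, hp.isIdempotentElem.eq]
    module
  rw [← sub_nonneg, key]
  have hq0 := hp.one_sub.nonneg
  have hα2 : 0 ≤ 1 - α ^ 2 := by nlinarith
  positivity

theorem smul_le_neg_of_sub_mul_self_le (hp : IsStarProjection p) (hpx : p * x = x)
    (hxp : x * p = x) (hα : 0 ≤ α) (hx : x ≤ 0) (h : p - x * x ≤ algebraMap ℝ A (1 - α ^ 2)) :
    α • p ≤ -x := by
  have hcomp : α ^ 2 • p ≤ x * x := by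
    have hconj := star_left_conjugate_le_conjugate h p
    have hl : p * (p - x * x) * p = p - x * x := by
      calc p * (p - x * x) * p = p * p * p - (p * x) * (x * p) := by noncomm_ring
        _ = p - x * x := by rw [hp.isIdempotentElem.eq, hp.isIdempotentElem.eq, hpx, hxp]
    have hr : p * algebraMap ℝ A (1 - α ^ 2) * p = (1 - α ^ 2) • p := by
      rw [Algebra.algebraMap_eq_smul_one, mul_smul_comm, mul_one, smul_mul_assoc,
        hp.isIdempotentElem.eq]
    rw [hp.isSelfAdjoint.star_eq, hl, hr] at hconj
    calc α ^ 2 • p = p - (1 - α ^ 2) • p := by module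
      _ ≤ x * x := sub_le_comm.mp hconj
  -- `w` is `-x` on the range of `p` and `α` on its complement, so `w ^ 2 ≥ α ^ 2`.
  set w := α • (1 - p) - x with hw
  have hw0 : 0 ≤ w := by
    have hq0 := hp.one_sub.nonneg
    have hx0 : 0 ≤ -x := neg_nonneg.mpr hx
    rw [hw, sub_eq_add_neg]
    positivity
  have hw2 : w ^ 2 = x * x + α ^ 2 • (1 - p) := by
    rw [hw, sq]
    simp only [mul_sub, sub_mul, mul_smul_comm, smul_mul_assoc, mul_one, one_mul, hpx, hxp,
      hp.isIdempotentElem.eq]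
    module
  have hsq : algebraMap ℝ A (α ^ 2) ≤ w ^ 2 := by
    rw [hw2, Algebra.algebraMap_eq_smul_one]
    calc α ^ 2 • (1 : A) = α ^ 2 • p + α ^ 2 • (1 - p) := by module
      _ ≤ x * x + α ^ 2 • (1 - p) := by gcongr
  have hαw := CStarAlgebra.algebraMap_le_of_algebraMap_sq_le hw0 hα hsq
  rw [Algebra.algebraMap_eq_smul_one, hw] at hαw
  calc α • p = α • (1 : A) - α • (1 - p) := by module
    _ ≤ α • (1 - p) - x - α • (1 - p) := by gcongr
    _ = -x := by abel

end IsStarProjection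

/-- If P is an orthogonal projection, S a self-adjoint involution, 0 < α ≤ 1,
PSP ≥ αP and (1-P)S(1-P) ≤ 0, then (1-P)S(1-P) ≤ -α(1-P). -/
theorem stmt8 {W : Type*} [NormedAddCommGroup W] [InnerProductSpace ℂ W] [CompleteSpace W]
    (P S : W →L[ℂ] W) (hP : IsSelfAdjoint P) (hP2 : P * P = P)
    (hS : IsSelfAdjoint S) (hS2 : S * S = 1)
    (α : ℝ) (hα0 : 0 < α) (hα1 : α ≤ 1)
    (h1 : (P * S * P - (α : ℂ) • P).IsPositive)
    (h2 : (-((1 - P) * S * (1 - P))).IsPositive) :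
    (-((1 - P) * S * (1 - P)) - (α : ℂ) • (1 - P)).IsPositive := by
  rw [← ContinuousLinearMap.nonneg_iff_isPositive] at h1 h2 ⊢
  rw [Complex.coe_smul] at h1 ⊢
  have hp : IsStarProjection P := ⟨hP2, hP⟩
  set Q := 1 - P
  have hq : IsStarProjection Q := hp.one_sub
  have hPQ : 1 - Q = P := sub_sub_cancel 1 P
  have hbb : P * S * Q * star (P * S * Q) = P - P * S * P * (P * S * P) := by
    rw [star_mul, star_mul, hP.star_eq, hS.star_eq, hq.isSelfAdjoint.star_eq, ← mul_assoc]
    exact hp.isIdempotentElem.mul_one_sub_mul_mul_one_sub_mul hS2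
  have hbb' : star (P * S * Q) * (P * S * Q) = Q - Q * S * Q * (Q * S * Q) := by
    rw [star_mul, star_mul, hP.star_eq, hS.star_eq, hq.isSelfAdjoint.star_eq, ← mul_assoc, ← hPQ]
    exact hq.isIdempotentElem.mul_one_sub_mul_mul_one_sub_mul hS2
  have hP_le : P - P * S * P * (P * S * P) ≤ algebraMap ℝ _ (1 - α ^ 2) :=
    hp.sub_mul_self_le_of_smul_le (by rw [← mul_assoc, ← mul_assoc, hP2]) (by rw [mul_assoc, hP2])
      hα0.le hα1 (sub_nonneg.mp h1)
  have hQ_le : Q - Q * S * Q * (Q * S * Q) ≤ algebraMap ℝ _ (1 - α ^ 2) := by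
    rw [← hbb] at hP_le
    rw [← hbb']
    exact CStarAlgebra.star_mul_self_le_algebraMap_of_mul_star_self_le (by nlinarith) hP_le
  exact sub_nonneg.mpr <| hq.smul_le_neg_of_sub_mul_self_le
    (by rw [← mul_assoc, ← mul_assoc, hq.isIdempotentElem.eq])
    (by rw [mul_assoc, hq.isIdempotentElem.eq]) hα0.le (neg_nonneg.mp h2) hQ_le
end

section
/- Let P be an orthogonal projection and S a self-adjoint involution on a Hilbert space, and let 0 < α ≤ 1. Assume PSP ≥ αP and (1−P)S(1−P) ≤ 0. Then T := S(1−P) + PS is invertible (bounded with bounded inverse), and ‖T⁻¹‖ ≤ 1/(1 − √(1−α²)). -/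
/-!
Write `Q = 1 - P` and `c = √(1 - α²)`. As `S` is unitary, `‖PSPx‖ ≥ α‖Px‖` leaves at most
`c‖Px‖` for `QSPx`, so `‖QSP‖ ≤ c`; hence `‖PSQ‖ = ‖(QSP)*‖ ≤ c`, which in turn gives
`‖QSQx‖ ≥ α‖Qx‖`. For `T = SQ + PS` one has `re⟪Tx, Sx⟫ = ‖Qx‖² + ‖PSx‖²` with
`‖PSx‖ ≥ α‖Px‖ - c‖Qx‖`, and an elementary quadratic inequality turns this into
`re⟪Tx, Sx⟫ ≥ (1 - c)‖x‖²`, so `‖Tx‖ ≥ (1 - c)‖x‖`. The adjoint `T* = QS + SP` is the same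
operator with `P` and `Q` exchanged, so it is bounded below as well; an operator bounded below
whose adjoint is injective is invertible, and `‖T⁻¹‖ ≤ 1/(1 - c)`.
-/

section

open ContinuousLinearMap
open scoped InnerProductSpace

theorem one_sub_mul_sq_add_sq_le_sq_add_sq {a b c α p : ℝ} (ha : 0 ≤ a) (hc : 0 ≤ c)
    (hα : 0 ≤ α) (hcα : c ^ 2 + α ^ 2 = 1) (hαp : α * a - c * b ≤ p) :
    (1 - c) * (a ^ 2 + b ^ 2) ≤ b ^ 2 + p ^ 2 := by
  have hc1 : c ≤ 1 := by nlinarith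
  rcases le_total (c * b) (α * a) with h | h
  · have hsq : (α * a - c * b) ^ 2 ≤ p ^ 2 := pow_le_pow_left₀ (by linarith) hαp 2
    -- `1 + c` times this is `(α * a - (1 + c) * b) ^ 2`, as `α ^ 2 = (1 - c) * (1 + c)`
    have hdisc : 0 ≤ (1 - c) * a ^ 2 + (1 + c) * b ^ 2 - 2 * α * a * b := by
      nlinarith [sq_nonneg (α * a - (1 + c) * b)]
    nlinarith [mul_nonneg hc hdisc]
  · have hsq : (α * a) ^ 2 ≤ (c * b) ^ 2 := pow_le_pow_left₀ (by positivity) h 2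
    have hslack : 0 ≤ c * (1 - c) * (a ^ 2 + b ^ 2) :=
      mul_nonneg (mul_nonneg hc (by linarith)) (by positivity)
    nlinarith

theorem le_of_mul_mul_le_mul {a b t : ℝ} (ht : 0 ≤ t) (hb : 0 ≤ b) (h : a * t * t ≤ b * t) :
    a * t ≤ b := by
  rcases ht.eq_or_lt with rfl | ht
  · simpa using hb
  · exact le_of_mul_le_mul_right h ht

theorem IsSelfAdjoint.mem_unitary_of_mul_self_eq_one {R : Type*} [Monoid R] [StarMul R] {s : R}
    (hs : IsSelfAdjoint s) (hs2 : s * s = 1) : s ∈ unitary R :=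
  Unitary.mem_iff.mpr ⟨by rw [hs.star_eq, hs2], by rw [hs.star_eq, hs2]⟩

theorem ContinuousLinearMap.norm_inverse_le_of_forall_mul_norm_le {𝕜 E : Type*}
    [NontriviallyNormedField 𝕜] [NormedAddCommGroup E] [NormedSpace 𝕜 E] {T : E →L[𝕜] E}
    {δ : ℝ} (hu : IsUnit T) (hδ : 0 < δ) (hT : ∀ x, δ * ‖x‖ ≤ ‖T x‖) :
    ‖Ring.inverse T‖ ≤ δ⁻¹ := by
  refine opNorm_le_bound _ (inv_nonneg.mpr hδ.le) fun y ↦ ?_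
  have hy := hT (Ring.inverse T y)
  rw [← mul_apply_eq_comp, Ring.mul_inverse_cancel _ hu, one_apply_eq_self] at hy
  rwa [inv_mul_eq_div, le_div_iff₀' hδ]

variable {𝕜 E : Type*} [RCLike 𝕜] [NormedAddCommGroup E] [InnerProductSpace 𝕜 E] [CompleteSpace E]
  {P S : E →L[𝕜] E} {α : ℝ}

namespace IsStarProjection

theorem apply_apply (hP : IsStarProjection P) (x : E) : P (P x) = P x := by
  rw [← mul_apply_eq_comp, hP.isIdempotentElem.eq]

theorem inner_apply_left_eq (hP : IsStarProjection P) (x y : E) :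
    ⟪P x, y⟫_𝕜 = ⟪P x, P y⟫_𝕜 := by
  simpa only [coe_coe, hP.apply_apply] using hP.isSelfAdjoint.isSymmetric (P x) y

theorem re_inner_apply_self (hP : IsStarProjection P) (x : E) :
    RCLike.re ⟪P x, x⟫_𝕜 = ‖P x‖ ^ 2 := by
  rw [hP.inner_apply_left_eq, inner_self_eq_norm_sq]

theorem norm_sq_apply_add_norm_sq_one_sub_apply (hP : IsStarProjection P) (x : E) :
    ‖P x‖ ^ 2 + ‖(1 - P) x‖ ^ 2 = ‖x‖ ^ 2 := by
  have horth : ⟪P x, (1 - P) x⟫_𝕜 = 0 := by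
    rw [hP.inner_apply_left_eq, ← mul_apply_eq_comp, hP.mul_one_sub_self,
      zero_apply, inner_zero_right]
  simpa [sq] using (norm_add_sq_eq_norm_sq_add_norm_sq_of_inner_eq_zero _ _ horth).symm

theorem norm_apply_le (hP : IsStarProjection P) (x : E) : ‖P x‖ ≤ ‖x‖ := by
  simpa using le_of_opNorm_le _ (hP.norm_le P) x

theorem mul_norm_le_norm_apply_apply_apply (hP : IsStarProjection P)
    {A : E →L[𝕜] E} (h : (α : 𝕜) • P ≤ P * A * P) (x : E) :
    α * ‖P x‖ ≤ ‖P (A (P x))‖ := by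
  have hpos := ((le_def _ _).mp h).re_inner_nonneg_left x
  have hform : RCLike.re ⟪(P * A * P - (α : 𝕜) • P) x, x⟫_𝕜 =
      RCLike.re ⟪P (A (P x)), P x⟫_𝕜 - α * ‖P x‖ ^ 2 := by
    rw [sub_apply, inner_sub_left, map_sub, smul_apply, inner_smul_left, RCLike.conj_ofReal,
      RCLike.re_ofReal_mul, hP.re_inner_apply_self, mul_apply_eq_comp, mul_apply_eq_comp,
      hP.inner_apply_left_eq]
  refine le_of_mul_mul_le_mul (norm_nonneg _) (norm_nonneg _) ?_
  calc α * ‖P x‖ * ‖P x‖ ≤ RCLike.re ⟪P (A (P x)), P x⟫_𝕜 := by nlinarith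
    _ ≤ ‖P (A (P x))‖ * ‖P x‖ := re_inner_le_norm _ _

end IsStarProjection

theorem IsSelfAdjoint.norm_apply_of_mul_self_eq_one (hS : IsSelfAdjoint S) (hS2 : S * S = 1)
    (x : E) : ‖S x‖ = ‖x‖ :=
  norm_map_of_mem_unitary (hS.mem_unitary_of_mul_self_eq_one hS2) x

theorem ContinuousLinearMap.isUnit_of_forall_mul_norm_le (T : E →L[𝕜] E) {δ : ℝ} (hδ : 0 < δ)
    (hT : ∀ x, δ * ‖x‖ ≤ ‖T x‖) (hT' : ∀ x, δ * ‖x‖ ≤ ‖adjoint T x‖) : IsUnit T := by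
  have eq_zero_of_bound {A : E →L[𝕜] E} (hA : ∀ x, δ * ‖x‖ ≤ ‖A x‖) {x : E} (hx : A x = 0) :
      x = 0 := by
    have := hA x
    rw [hx, norm_zero] at this
    exact norm_le_zero_iff.mp (by nlinarith [norm_nonneg x])
  rw [isUnit_iff_bijective, bijective_iff_dense_range_and_antilipschitz,
    Submodule.topologicalClosure_eq_top_iff, orthogonal_range]
  refine ⟨LinearMap.ker_eq_bot'.mpr fun x hx ↦ eq_zero_of_bound hT' hx, δ⁻¹.toNNReal,
    antilipschitz_of_bound T fun x ↦ ?_⟩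
  rw [Real.coe_toNNReal _ (inv_nonneg.mpr hδ.le), inv_mul_eq_div, le_div_iff₀' hδ]
  exact hT x

theorem norm_one_sub_mul_mul_le (hP : IsStarProjection P) (hS : IsSelfAdjoint S)
    (hS2 : S * S = 1) (hα0 : 0 ≤ α) (hα1 : α ≤ 1) (hlb : ∀ x, α * ‖P x‖ ≤ ‖P (S (P x))‖) :
    ‖(1 - P) * S * P‖ ≤ √(1 - α ^ 2) := by
  refine opNorm_le_bound _ (Real.sqrt_nonneg _) fun x ↦ ?_
  have hpyth := hP.norm_sq_apply_add_norm_sq_one_sub_apply (S (P x))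
  rw [hS.norm_apply_of_mul_self_eq_one hS2] at hpyth
  have hPSP : (α * ‖P x‖) ^ 2 ≤ ‖P (S (P x))‖ ^ 2 := pow_le_pow_left₀ (by positivity) (hlb x) 2
  have hPx : ‖P x‖ ^ 2 ≤ ‖x‖ ^ 2 := pow_le_pow_left₀ (norm_nonneg _) (hP.norm_apply_le x) 2
  have hsq : ‖((1 - P) * S * P) x‖ ^ 2 ≤ (1 - α ^ 2) * ‖x‖ ^ 2 := by
    simp only [mul_apply_eq_comp]
    nlinarith [mul_le_mul_of_nonneg_left hPx (sub_nonneg.2 (pow_le_one₀ (n := 2) hα0 hα1))]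
  calc ‖((1 - P) * S * P) x‖ ≤ √((1 - α ^ 2) * ‖x‖ ^ 2) := Real.le_sqrt_of_sq_le hsq
    _ = √(1 - α ^ 2) * ‖x‖ := by rw [Real.sqrt_mul' _ (sq_nonneg _), Real.sqrt_sq (norm_nonneg _)]

theorem norm_apply_apply_one_sub_apply_le (hP : IsStarProjection P) (hS : IsSelfAdjoint S)
    (hS2 : S * S = 1) (hα0 : 0 ≤ α) (hα1 : α ≤ 1) (hlb : ∀ x, α * ‖P x‖ ≤ ‖P (S (P x))‖)
    (x : E) : ‖P (S ((1 - P) x))‖ ≤ √(1 - α ^ 2) * ‖(1 - P) x‖ := by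
  have hstar : P * S * (1 - P) = star ((1 - P) * S * P) := by
    simp [star_mul, hP.isSelfAdjoint.star_eq, hS.star_eq, mul_assoc]
  calc ‖P (S ((1 - P) x))‖ = ‖(P * S * (1 - P)) ((1 - P) x)‖ := by
        simp only [mul_apply_eq_comp, hP.one_sub.apply_apply]
    _ ≤ ‖P * S * (1 - P)‖ * ‖(1 - P) x‖ := le_opNorm _ _
    _ ≤ √(1 - α ^ 2) * ‖(1 - P) x‖ := by
        rw [hstar, star_eq_adjoint, adjoint.norm_map]
        gcongr
        exact norm_one_sub_mul_mul_le hP hS hS2 hα0 hα1 hlb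

theorem mul_norm_le_norm_one_sub_apply_apply_one_sub_apply (hP : IsStarProjection P)
    (hS : IsSelfAdjoint S) (hS2 : S * S = 1) (hα0 : 0 ≤ α) (hα1 : α ≤ 1)
    (hlb : ∀ x, α * ‖P x‖ ≤ ‖P (S (P x))‖) (x : E) :
    α * ‖(1 - P) x‖ ≤ ‖(1 - P) (S ((1 - P) x))‖ := by
  have hPSQ := norm_apply_apply_one_sub_apply_le hP hS hS2 hα0 hα1 hlb ((1 - P) x)
  rw [hP.one_sub.apply_apply] at hPSQ
  set z := (1 - P) x
  have hpyth := hP.norm_sq_apply_add_norm_sq_one_sub_apply (S z)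
  rw [hS.norm_apply_of_mul_self_eq_one hS2] at hpyth
  have hc : √(1 - α ^ 2) ^ 2 = 1 - α ^ 2 := Real.sq_sqrt (by nlinarith)
  have hsq : (α * ‖z‖) ^ 2 ≤ ‖(1 - P) (S z)‖ ^ 2 := by
    nlinarith [pow_le_pow_left₀ (norm_nonneg _) hPSQ 2]
  exact (pow_le_pow_iff_left₀ (by positivity) (norm_nonneg _) two_ne_zero).mp hsq

theorem one_sub_sqrt_mul_norm_le_norm_mul_one_sub_add_mul_apply (hP : IsStarProjection P)
    (hS : IsSelfAdjoint S) (hS2 : S * S = 1) (hα0 : 0 ≤ α) (hα1 : α ≤ 1)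
    (hlb : ∀ x, α * ‖P x‖ ≤ ‖P (S (P x))‖) (x : E) :
    (1 - √(1 - α ^ 2)) * ‖x‖ ≤ ‖(S * (1 - P) + P * S) x‖ := by
  have hSu := hS.mem_unitary_of_mul_self_eq_one hS2
  have hc : √(1 - α ^ 2) ^ 2 + α ^ 2 = 1 := by rw [Real.sq_sqrt (by nlinarith)]; ring
  have hPS : α * ‖P x‖ - √(1 - α ^ 2) * ‖(1 - P) x‖ ≤ ‖P (S x)‖ := by
    have hsplit : P (S (P x)) = P (S x) - P (S ((1 - P) x)) := by simp
    have := norm_sub_le (P (S x)) (P (S ((1 - P) x)))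
    linarith [hlb x, norm_apply_apply_one_sub_apply_le hP hS hS2 hα0 hα1 hlb x, hsplit ▸ this]
  have hform :
      RCLike.re ⟪(S * (1 - P) + P * S) x, S x⟫_𝕜 = ‖(1 - P) x‖ ^ 2 + ‖P (S x)‖ ^ 2 := by
    rw [add_apply, inner_add_left, map_add, mul_apply_eq_comp, mul_apply_eq_comp,
      inner_map_map_of_mem_unitary hSu, hP.one_sub.re_inner_apply_self, hP.re_inner_apply_self]
  have hCS :
      RCLike.re ⟪(S * (1 - P) + P * S) x, S x⟫_𝕜 ≤ ‖(S * (1 - P) + P * S) x‖ * ‖x‖ := by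
    simpa [norm_map_of_mem_unitary hSu] using re_inner_le_norm ((S * (1 - P) + P * S) x) (S x)
  have harith :=
    one_sub_mul_sq_add_sq_le_sq_add_sq (norm_nonneg _) (Real.sqrt_nonneg _) hα0 hc hPS
  rw [hP.norm_sq_apply_add_norm_sq_one_sub_apply] at harith
  refine le_of_mul_mul_le_mul (norm_nonneg _) (norm_nonneg _) ?_
  nlinarith

end

theorem stmt9_general {W : Type*} [NormedAddCommGroup W] [InnerProductSpace ℂ W] [CompleteSpace W]
    (P S : W →L[ℂ] W) (hP : IsSelfAdjoint P) (hP2 : P * P = P)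
    (hS : IsSelfAdjoint S) (hS2 : S * S = 1)
    (α : ℝ) (hα0 : 0 < α) (hα1 : α ≤ 1)
    (h1 : (P * S * P - (α : ℂ) • P).IsPositive) :
    ∃ Tinv : W →L[ℂ] W,
      (S * (1 - P) + P * S) * Tinv = 1 ∧
      Tinv * (S * (1 - P) + P * S) = 1 ∧
      ‖Tinv‖ ≤ 1 / (1 - Real.sqrt (1 - α ^ 2)) := by
  have hproj : IsStarProjection P := ⟨hP2, hP⟩
  have hlb := hproj.mul_norm_le_norm_apply_apply_apply ((ContinuousLinearMap.le_def _ _).mpr h1)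
  have hδ : 0 < 1 - √(1 - α ^ 2) := sub_pos.mpr ((Real.sqrt_lt' one_pos).mpr (by nlinarith))
  have hT := one_sub_sqrt_mul_norm_le_norm_mul_one_sub_add_mul_apply hproj hS hS2 hα0.le hα1 hlb
  have hT' := one_sub_sqrt_mul_norm_le_norm_mul_one_sub_add_mul_apply hproj.one_sub hS hS2 hα0.le
    hα1 (mul_norm_le_norm_one_sub_apply_apply_one_sub_apply hproj hS hS2 hα0.le hα1 hlb)
  have hadj : ContinuousLinearMap.adjoint (S * (1 - P) + P * S) =
      S * (1 - (1 - P)) + (1 - P) * S := by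
    rw [← ContinuousLinearMap.star_eq_adjoint, sub_sub_cancel]
    simp [star_mul, hP.star_eq, hS.star_eq, add_comm]
  have hu := ContinuousLinearMap.isUnit_of_forall_mul_norm_le _ hδ hT (hadj ▸ hT')
  refine ⟨_, Ring.mul_inverse_cancel _ hu, Ring.inverse_mul_cancel _ hu, ?_⟩
  rw [one_div]
  exact ContinuousLinearMap.norm_inverse_le_of_forall_mul_norm_le hu hδ hT

/-- Under the hypotheses PSP ≥ αP and (1-P)S(1-P) ≤ 0 with 0 < α ≤ 1,
the operator T = S(1-P) + PS is boundedly invertible with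
‖T⁻¹‖ ≤ 1/(1 - √(1-α²)). -/
theorem stmt9 {W : Type*} [NormedAddCommGroup W] [InnerProductSpace ℂ W] [CompleteSpace W]
    (P S : W →L[ℂ] W) (hP : IsSelfAdjoint P) (hP2 : P * P = P)
    (hS : IsSelfAdjoint S) (hS2 : S * S = 1)
    (α : ℝ) (hα0 : 0 < α) (hα1 : α ≤ 1)
    (h1 : (P * S * P - (α : ℂ) • P).IsPositive)
    (h2 : (-((1 - P) * S * (1 - P))).IsPositive) :
    ∃ Tinv : W →L[ℂ] W,
      (S * (1 - P) + P * S) * Tinv = 1 ∧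
      Tinv * (S * (1 - P) + P * S) = 1 ∧
      ‖Tinv‖ ≤ 1 / (1 - Real.sqrt (1 - α ^ 2)) :=
  stmt9_general P S hP hP2 hS hS2 α hα0 hα1 h1
end

section
/- Let S₁, S₂ be two admissible involutions on a Krein space (W, Q), with associated compatible scalar products (v|w)ᵢ := (v|QSᵢw). Then K := S₂S₁ is pseudo-unitary for Q (i.e., (Kv|QKw) = (v|Qw)) and K is a positive operator with respect to the scalar product (·|·)₁: there is a > 0 with (v|Kv)₁ ≥ a(v|v)₁ for all v. Consequently 1 + K is invertible and ‖(1−K)(1+K)⁻¹‖₁ < 1. -/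
/-!
Write `T = Q S₁`, so that `(v|w)₁ = ⟪v, T w⟫`. Because `S₁` preserves `Q` and `S₁² = 1`,
`(v|Kv)₁ = (S₁v|S₁v)₂`, and the equivalence of the two norms makes `T K` coercive; a coercive
operator dominates every bounded quadratic form, which gives the positivity of `K`. Then
`T (1 + K)` is coercive, hence invertible, and so is `1 + K`. Finally, for `v = (1 + K) u` the
Cayley transform sends `v` to `(1 - K) u`, and
`(v|v)₁ - ((1 - K) u|(1 - K) u)₁ = 4 Re (u|Ku)₁ ≥ 4a (u|u)₁ ≥ ε (v|v)₁`.
-/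

open RCLike
open scoped InnerProductSpace

namespace ContinuousLinearMap

variable {𝕜 E : Type*} [RCLike 𝕜] [NormedAddCommGroup E] [InnerProductSpace 𝕜 E]

def IsCoercive (T : E →L[𝕜] E) : Prop :=
  ∃ c > 0, ∀ v, c * ‖v‖ ^ 2 ≤ re ⟪v, T v⟫_𝕜

lemma re_inner_map_self_le (T : E →L[𝕜] E) (v : E) : re ⟪v, T v⟫_𝕜 ≤ ‖T‖ * ‖v‖ ^ 2 :=
  calc re ⟪v, T v⟫_𝕜 ≤ ‖v‖ * ‖T v‖ := re_inner_le_norm _ _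
    _ ≤ ‖v‖ * (‖T‖ * ‖v‖) := by gcongr; exact T.le_opNorm v
    _ = ‖T‖ * ‖v‖ ^ 2 := by ring

lemma _root_.LinearMap.IsSymmetric.re_inner_add_map_add {T : E →L[𝕜] E}
    (hT : (T : E →ₗ[𝕜] E).IsSymmetric) (u w : E) :
    re ⟪u + w, T (u + w)⟫_𝕜 = re ⟪u - w, T (u - w)⟫_𝕜 + 4 * re ⟪u, T w⟫_𝕜 := by
  have hsymm : re ⟪w, T u⟫_𝕜 = re ⟪u, T w⟫_𝕜 := by
    rw [inner_re_symm]; exact congrArg re (hT u w)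
  simp only [map_add, map_sub, inner_add_left, inner_add_right, inner_sub_left, inner_sub_right,
    hsymm]
  ring

namespace IsCoercive

variable {T : E →L[𝕜] E}

lemma re_inner_nonneg (hT : T.IsCoercive) (v : E) : 0 ≤ re ⟪v, T v⟫_𝕜 :=
  let ⟨c, hc, h⟩ := hT
  (by positivity : 0 ≤ c * ‖v‖ ^ 2).trans (h v)

lemma isUnit [CompleteSpace E] (hT : T.IsCoercive) : IsUnit T := by
  obtain ⟨c, hc, h⟩ := hT
  refine isUnit_of_forall_le_norm_inner_map T (c := ⟨c, hc.le⟩) hc fun v => ?_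
  rw [norm_inner_symm]
  exact (mul_comm _ c).trans_le ((h v).trans (re_le_norm _))

lemma add_of_re_inner_nonneg (hT : T.IsCoercive) {A : E →L[𝕜] E}
    (hA : ∀ v, 0 ≤ re ⟪v, A v⟫_𝕜) : (T + A).IsCoercive := by
  obtain ⟨c, hc, h⟩ := hT
  refine ⟨c, hc, fun v => ?_⟩
  simpa only [add_apply, inner_add_right, map_add, add_zero] using add_le_add (h v) (hA v)

lemma exists_pos_mul_le (hT : T.IsCoercive) {f : E → ℝ} {M : ℝ}
    (hf : ∀ v, f v ≤ M * ‖v‖ ^ 2) : ∃ a > 0, ∀ v, a * f v ≤ re ⟪v, T v⟫_𝕜 := by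
  obtain ⟨c, hc, h⟩ := hT
  have hM : 0 < max M 1 := lt_max_of_lt_right one_pos
  refine ⟨c / max M 1, by positivity, fun v => ?_⟩
  calc c / max M 1 * f v ≤ c / max M 1 * (max M 1 * ‖v‖ ^ 2) := by
        gcongr; exact (hf v).trans (by gcongr; exact le_max_left _ _)
    _ = c * ‖v‖ ^ 2 := by field_simp
    _ ≤ re ⟪v, T v⟫_𝕜 := h v

lemma of_re_inner_eq (hT : T.IsCoercive) {A R S : E →L[𝕜] E} (hRS : R * S = 1)
    (h : ∀ v, re ⟪v, A v⟫_𝕜 = re ⟪S v, T (S v)⟫_𝕜) : A.IsCoercive := by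
  obtain ⟨c, hc, hcT⟩ := hT
  refine ⟨c / (‖R‖ + 1) ^ 2, by positivity, fun v => ?_⟩
  have hv : ‖v‖ ≤ (‖R‖ + 1) * ‖S v‖ :=
    calc ‖v‖ = ‖R (S v)‖ := by rw [← mul_apply_eq_comp, hRS, one_apply_eq_self]
      _ ≤ ‖R‖ * ‖S v‖ := R.le_opNorm _
      _ ≤ (‖R‖ + 1) * ‖S v‖ := by gcongr; linarith
  calc c / (‖R‖ + 1) ^ 2 * ‖v‖ ^ 2 ≤ c / (‖R‖ + 1) ^ 2 * ((‖R‖ + 1) * ‖S v‖) ^ 2 := by gcongr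
    _ = c * ‖S v‖ ^ 2 := by field_simp
    _ ≤ re ⟪v, A v⟫_𝕜 := (hcT _).trans_eq (h v).symm

lemma exists_cayley_contraction (hT : T.IsCoercive) (hTsymm : (T : E →ₗ[𝕜] E).IsSymmetric)
    {K : E →L[𝕜] E} {a : ℝ} (ha : 0 < a) (hK : ∀ u, a * re ⟪u, T u⟫_𝕜 ≤ re ⟪u, T (K u)⟫_𝕜) :
    ∃ c : ℝ, 0 ≤ c ∧ c < 1 ∧ ∀ u,
      re ⟪u - K u, T (u - K u)⟫_𝕜 ≤ c ^ 2 * re ⟪u + K u, T (u + K u)⟫_𝕜 := by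
  have hbound : ∀ u, re ⟪u + K u, T (u + K u)⟫_𝕜 ≤ ‖T‖ * ‖1 + K‖ ^ 2 * ‖u‖ ^ 2 := fun u =>
    calc re ⟪u + K u, T (u + K u)⟫_𝕜 ≤ ‖T‖ * ‖(1 + K) u‖ ^ 2 := T.re_inner_map_self_le _
      _ ≤ ‖T‖ * (‖1 + K‖ * ‖u‖) ^ 2 := by gcongr; exact (1 + K).le_opNorm u
      _ = ‖T‖ * ‖1 + K‖ ^ 2 * ‖u‖ ^ 2 := by ring
  obtain ⟨ε, hε, hdom⟩ := hT.exists_pos_mul_le hbound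
  set δ := min (4 * a * ε) 1
  have hδ : 0 < δ := lt_min (by positivity) one_pos
  have hδ1 : δ ≤ 1 := min_le_right _ _
  refine ⟨√(1 - δ), Real.sqrt_nonneg _, (Real.sqrt_lt' one_pos).2 (by linarith), fun u => ?_⟩
  rw [Real.sq_sqrt (by linarith)]
  have hdomu : a * (ε * re ⟪u + K u, T (u + K u)⟫_𝕜) ≤ a * re ⟪u, T u⟫_𝕜 :=
    mul_le_mul_of_nonneg_left (hdom u) ha.le
  have hδu : δ * re ⟪u + K u, T (u + K u)⟫_𝕜 ≤ 4 * a * ε * re ⟪u + K u, T (u + K u)⟫_𝕜 :=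
    mul_le_mul_of_nonneg_right (min_le_left _ _) (hT.re_inner_nonneg _)
  linarith [hTsymm.re_inner_add_map_add u (K u), hK u]

end IsCoercive

end ContinuousLinearMap

open ContinuousLinearMap in
theorem stmt13_general {W : Type*} [NormedAddCommGroup W] [InnerProductSpace ℂ W] [CompleteSpace W]
    (Q S₁ S₂ : W →L[ℂ] W)
    (h₁ : S₁ * S₁ = 1)
    (hpres₁ : ∀ v w : W, (inner ℂ (S₁ v) (Q (S₁ w)) : ℂ) = inner ℂ v (Q w))
    (hpres₂ : ∀ v w : W, (inner ℂ (S₂ v) (Q (S₂ w)) : ℂ) = inner ℂ v (Q w))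
    (hpos₁ : (Q * S₁).IsPositive)
    (hbdd₁ : ∃ c > 0, ∀ v : W, c * ‖v‖ ^ 2 ≤ ((inner ℂ v ((Q * S₁) v) : ℂ)).re)
    (hbdd₂ : ∃ c > 0, ∀ v : W, c * ‖v‖ ^ 2 ≤ ((inner ℂ v ((Q * S₂) v) : ℂ)).re) :
    let K := S₂ * S₁
    (∀ v w : W, (inner ℂ (K v) (Q (K w)) : ℂ) = inner ℂ v (Q w)) ∧
    (∃ a > 0, ∀ v : W,
      a * ((inner ℂ v ((Q * S₁) v) : ℂ)).re ≤ ((inner ℂ v ((Q * S₁) (K v)) : ℂ)).re) ∧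
    (∃ Kinv : W →L[ℂ] W, (1 + K) * Kinv = 1 ∧ Kinv * (1 + K) = 1 ∧
      ∃ c : ℝ, 0 ≤ c ∧ c < 1 ∧ ∀ v : W,
        ((inner ℂ (((1 - K) * Kinv) v) ((Q * S₁) (((1 - K) * Kinv) v)) : ℂ)).re
          ≤ c ^ 2 * ((inner ℂ v ((Q * S₁) v) : ℂ)).re) := by
  intro K
  have hT : (Q * S₁).IsCoercive := hbdd₁
  have hT₂ : (Q * S₂).IsCoercive := hbdd₂
  have hTK : (Q * S₁ * K).IsCoercive := hT₂.of_re_inner_eq h₁ fun v => by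
    have hS₁ : S₁ (S₁ v) = v := by rw [← mul_apply_eq_comp, h₁, one_apply_eq_self]
    show re ⟪v, Q (S₁ (S₂ (S₁ v)))⟫_ℂ = re ⟪S₁ v, Q (S₂ (S₁ v))⟫_ℂ
    rw [← hpres₁ (S₁ v) (S₂ (S₁ v)), hS₁]
  obtain ⟨a, ha, hK⟩ := hTK.exists_pos_mul_le (Q * S₁).re_inner_map_self_le
  have hunit : IsUnit (1 + K) := by
    have := (hT.add_of_re_inner_nonneg hTK.re_inner_nonneg).isUnit
    rw [← mul_one_add, mul_assoc] at this
    exact (hT.isUnit.unit.isUnit_units_mul _).mp this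
  obtain ⟨Kinv, hright, hleft⟩ := isUnit_iff_exists.mp hunit
  obtain ⟨c, hc0, hc1, hc⟩ := hT.exists_cayley_contraction hpos₁.isSymmetric ha hK
  refine ⟨fun v w => (hpres₂ _ _).trans (hpres₁ v w), ⟨a, ha, hK⟩, Kinv, hright, hleft,
    c, hc0, hc1, fun v => ?_⟩
  have hv : Kinv v + K (Kinv v) = v := by
    simpa only [mul_apply_eq_comp, add_apply, one_apply_eq_self] using DFunLike.congr_fun hright v
  have hw : ((1 - K) * Kinv) v = Kinv v - K (Kinv v) := by
    rw [mul_apply_eq_comp, sub_apply, one_apply_eq_self]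
  have := hc (Kinv v)
  rw [hv] at this
  rwa [hw]

/-- For two admissible involutions S₁, S₂ on a Krein space (W,Q), K = S₂S₁ is
pseudo-unitary and positive with respect to (·|·)₁; consequently 1 + K is
invertible and ‖(1-K)(1+K)⁻¹‖₁ < 1. -/
theorem stmt13 {W : Type*} [NormedAddCommGroup W] [InnerProductSpace ℂ W] [CompleteSpace W]
    (Q S₁ S₂ : W →L[ℂ] W) (hQ : IsSelfAdjoint Q)
    (h₁ : S₁ * S₁ = 1) (h₂ : S₂ * S₂ = 1)
    (hpres₁ : ∀ v w : W, (inner ℂ (S₁ v) (Q (S₁ w)) : ℂ) = inner ℂ v (Q w))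
    (hpres₂ : ∀ v w : W, (inner ℂ (S₂ v) (Q (S₂ w)) : ℂ) = inner ℂ v (Q w))
    (hpos₁ : (Q * S₁).IsPositive) (hpos₂ : (Q * S₂).IsPositive)
    (hbdd₁ : ∃ c > 0, ∀ v : W, c * ‖v‖ ^ 2 ≤ ((inner ℂ v ((Q * S₁) v) : ℂ)).re)
    (hbdd₂ : ∃ c > 0, ∀ v : W, c * ‖v‖ ^ 2 ≤ ((inner ℂ v ((Q * S₂) v) : ℂ)).re) :
    let K := S₂ * S₁
    (∀ v w : W, (inner ℂ (K v) (Q (K w)) : ℂ) = inner ℂ v (Q w)) ∧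
    (∃ a > 0, ∀ v : W,
      a * ((inner ℂ v ((Q * S₁) v) : ℂ)).re ≤ ((inner ℂ v ((Q * S₁) (K v)) : ℂ)).re) ∧
    (∃ Kinv : W →L[ℂ] W, (1 + K) * Kinv = 1 ∧ Kinv * (1 + K) = 1 ∧
      ∃ c : ℝ, 0 ≤ c ∧ c < 1 ∧ ∀ v : W,
        ((inner ℂ (((1 - K) * Kinv) v) ((Q * S₁) (((1 - K) * Kinv) v)) : ℂ)).re
          ≤ c ^ 2 * ((inner ℂ v ((Q * S₁) v) : ℂ)).re) :=
  stmt13_general Q S₁ S₂ h₁ hpres₁ hpres₂ hpos₁ hbdd₁ hbdd₂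
end

section
/- In a Krein space (W, Q), let Z₁⁺ be a maximal uniformly positive subspace and Z₂⁻ a maximal uniformly negative subspace. Then Z₁⁺ and Z₂⁻ are complementary: Z₁⁺ ∩ Z₂⁻ = {0} and Z₁⁺ + Z₂⁻ = W. -/
/-!
Let `S` be an admissible involution, `W = W⁺ ⊕ W⁻` its eigenspace decomposition with projections
`P±`, and `‖·‖_S` the associated norm, for which `W⁺ ⊥ W⁻` and `⟪v, Q v⟫ = ‖P⁺v‖_S² - ‖P⁻v‖_S²`.
Uniform positivity of `Z` bounds `‖v‖` by `‖P⁺v‖` on `Z` and gives `‖P⁻v‖_S² ≤ k ‖P⁺v‖_S²` with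
`k < 1`. If `Z` is maximal, then `P⁺(Z) = W⁺`: otherwise Lax–Milgram on `W⁺` yields `w₀ ∈ W⁺`
that is `S`-orthogonal to `P⁺(Z)`, and `Z + ℂ w₀` is still uniformly positive. So `Z₁` is the
graph of a strict `‖·‖_S`-contraction `K₁ : W⁺ → W⁻`, and likewise `Z₂` of some `K₂ : W⁻ → W⁺`.
Then `N = K₁P⁺ + K₂P⁻` is a strict `‖·‖_S`-contraction, hence some power of `N` has operator
norm `< 1`, `1 + N` is invertible, and `x + N x = (P⁺x + K₁P⁺x) + (P⁻x + K₂P⁻x) ∈ Z₁ + Z₂`.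
-/

open scoped InnerProductSpace

open Finset in
theorem isUnit_one_add_of_norm_pow_lt_one {A : Type*} [NormedRing A] [HasSummableGeomSeries A]
    {a : A} {m : ℕ} (h : ‖a ^ m‖ < 1) : IsUnit (1 + a) := by
  have hm : ‖(-a) ^ m‖ < 1 := by
    rcases neg_one_pow_eq_or A m with h1 | h1 <;> simpa [neg_pow, h1] using h
  have hcomm : Commute (1 - -a) (∑ i ∈ range m, (-a) ^ i) :=
    (mul_neg_geom_sum (-a) m).trans (geom_sum_mul_neg (-a) m).symm
  have := (hcomm.isUnit_mul_iff.1 (mul_neg_geom_sum (-a) m ▸ isUnit_one_sub_of_norm_lt_one hm)).1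
  rwa [sub_neg_eq_add] at this

theorem norm_le_sqrt_mul_of_mul_sq_le {E F : Type*} [SeminormedAddCommGroup E]
    [SeminormedAddCommGroup F] {x : E} {y : F} {c D : ℝ} (hc : 0 < c)
    (h : c * ‖y‖ ^ 2 ≤ D * ‖x‖ ^ 2) : ‖y‖ ≤ √(D / c) * ‖x‖ := by
  rw [← Real.sqrt_sq (norm_nonneg y), ← Real.sqrt_sq (norm_nonneg x), ← Real.sqrt_mul']
  · refine Real.sqrt_le_sqrt ?_
    rw [div_mul_eq_mul_div, le_div_iff₀ hc]
    linarith
  · positivity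

section

variable {𝕜 E : Type*} [NontriviallyNormedField 𝕜] [NormedAddCommGroup E] [NormedSpace 𝕜 E]
  {q : E → ℝ} {c C k : ℝ}

theorem LinearMap.surjective_one_add_of_forall_le_mul [CompleteSpace E] (hc : 0 < c)
    (hk₀ : 0 ≤ k) (hk₁ : k < 1) (hlow : ∀ x, c * ‖x‖ ^ 2 ≤ q x) (hup : ∀ x, q x ≤ C * ‖x‖ ^ 2)
    (N : E →ₗ[𝕜] E) (hN : ∀ x, q (N x) ≤ k * q x) : Function.Surjective ⇑(1 + N) := by
  have hbound : ∀ {y x : E} {K : ℝ}, 0 ≤ K → q y ≤ K * q x → ‖y‖ ≤ √(K * C / c) * ‖x‖ :=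
    fun {y x K} hK h => norm_le_sqrt_mul_of_mul_sq_le hc <| by
      nlinarith [hlow y, hup x, mul_le_mul_of_nonneg_left (hup x) hK]
  let N' : E →L[𝕜] E := N.mkContinuous _ fun x => hbound hk₀ (hN x)
  have hpow : ∀ m x, q ((N' ^ m) x) ≤ k ^ m * q x := by
    intro m
    induction m with
    | zero => simp
    | succ m ih =>
      intro x
      rw [pow_succ', mul_apply_eq_comp, pow_succ', mul_assoc]
      exact (hN _).trans (mul_le_mul_of_nonneg_left (ih x) hk₀)
  obtain ⟨m, hm⟩ : ∃ m : ℕ, k ^ m * C < c :=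
    (((tendsto_pow_atTop_nhds_zero_of_lt_one hk₀ hk₁).mul_const C).eventually
      (gt_mem_nhds (by simpa using hc))).exists
  have hnorm : ‖N' ^ m‖ < 1 := by
    refine (ContinuousLinearMap.opNorm_le_bound _ (Real.sqrt_nonneg _)
      fun x => hbound (pow_nonneg hk₀ m) (hpow m x)).trans_lt ?_
    rw [Real.sqrt_lt' one_pos, one_pow, div_lt_one hc]
    exact hm
  obtain ⟨u, hu⟩ := isUnit_one_add_of_norm_pow_lt_one hnorm
  intro w
  refine ⟨(↑u⁻¹ : E →L[𝕜] E) w, ?_⟩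
  simpa [hu, N'] using congr($(u.mul_inv) w)

end

open RCLike

theorem eq_zero_of_mul_norm_sq_nonpos {E : Type*} [NormedAddCommGroup E] {x : E} {c : ℝ}
    (hc : 0 < c) (h : c * ‖x‖ ^ 2 ≤ 0) : x = 0 := by
  simpa using (mul_nonpos_iff_pos_imp_nonpos.1 h).1 hc

section

variable {𝕜 E : Type*} [RCLike 𝕜] [NormedAddCommGroup E] [InnerProductSpace 𝕜 E]
  [CompleteSpace E] {c : ℝ}

theorem ContinuousLinearMap.surjective_of_coercive (T : E →L[𝕜] E) (hc : 0 < c)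
    (hT : ∀ x, c * ‖x‖ ^ 2 ≤ re ⟪x, T x⟫_𝕜) : Function.Surjective T := by
  have hanti : AntilipschitzWith c⁻¹.toNNReal T := by
    refine T.antilipschitz_of_bound fun x => ?_
    have h := (hT x).trans (re_inner_le_norm x (T x))
    rw [Real.coe_toNNReal _ (inv_nonneg.2 hc.le), le_inv_mul_iff₀ hc]
    nlinarith [norm_nonneg x, norm_nonneg (T x)]
  have hrange : IsClosed (LinearMap.range (T : E →ₗ[𝕜] E) : Set E) := by
    rw [LinearMap.coe_range]
    exact hanti.isClosed_range T.uniformContinuous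
  have : CompleteSpace (LinearMap.range (T : E →ₗ[𝕜] E)) := hrange.completeSpace_coe
  change Function.Surjective (T : E →ₗ[𝕜] E)
  rw [← LinearMap.range_eq_top, ← Submodule.orthogonal_eq_bot_iff, Submodule.eq_bot_iff]
  intro x hx
  have h := hT x
  have h0 : ⟪x, T x⟫_𝕜 = 0 :=
    Submodule.inner_left_of_mem_orthogonal (LinearMap.mem_range_self (T : E →ₗ[𝕜] E) x) hx
  rw [h0, map_zero] at h
  exact eq_zero_of_mul_norm_sq_nonpos hc h

theorem exists_ne_zero_forall_inner_apply_eq_zero (T : E →L[𝕜] E) {K M : Submodule 𝕜 E}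
    (hK : IsClosed (K : Set E)) (hM : IsClosed (M : Set E)) (hMK : M < K) (hc : 0 < c)
    (hT : ∀ x ∈ K, c * ‖x‖ ^ 2 ≤ re ⟪x, T x⟫_𝕜) :
    ∃ w ∈ K, w ≠ 0 ∧ ∀ m ∈ M, ⟪m, T w⟫_𝕜 = 0 := by
  have : CompleteSpace K := hK.completeSpace_coe
  let G : K →L[𝕜] K := K.orthogonalProjectionOnto ∘L T ∘L K.subtypeL
  have hG : ∀ m x : K, ⟪m, G x⟫_𝕜 = ⟪(m : E), T x⟫_𝕜 := fun m x =>
    K.inner_orthogonalProjectionOnto_eq_of_mem_left m _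
  let M' := M.comap K.subtype
  have : CompleteSpace M' := (hM.preimage continuous_subtype_val).completeSpace_coe
  obtain ⟨y, hyK, hyM⟩ := SetLike.exists_of_lt hMK
  have hM' : M' ≠ ⊤ := fun h => hyM (h ▸ Submodule.mem_top : (⟨y, hyK⟩ : K) ∈ M')
  obtain ⟨u, hu, hu0⟩ := (Submodule.ne_bot_iff _).1 (mt Submodule.orthogonal_eq_bot_iff.1 hM')
  obtain ⟨x, rfl⟩ := G.surjective_of_coercive hc (fun x => by rw [hG]; exact hT x x.2) u
  refine ⟨x, x.2, fun h => hu0 ?_, fun m hm => ?_⟩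
  · simp [(Submodule.coe_eq_zero).1 h]
  · rw [← hG ⟨m, hMK.le hm⟩]
    exact Submodule.inner_right_of_mem_orthogonal hm hu

end

theorem LinearMap.exists_comp_eq_of_injective {R M N P : Type*} [Semiring R] [AddCommMonoid M]
    [AddCommMonoid N] [AddCommMonoid P] [Module R M] [Module R N] [Module R P]
    {g : M →ₗ[R] N} (hg : Function.Injective g) (h : P →ₗ[R] N)
    (hh : ∀ x, h x ∈ LinearMap.range g) : ∃ f : P →ₗ[R] M, g ∘ₗ f = h :=
  ⟨(LinearEquiv.ofInjective g hg).symm.toLinearMap ∘ₗ h.codRestrict _ hh, LinearMap.ext fun x => by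
    simp⟩

namespace Krein

variable {W : Type*} [NormedAddCommGroup W] [InnerProductSpace ℂ W]

def IsUniformlyPositive (Q : W →L[ℂ] W) (Z : Submodule ℂ W) : Prop :=
  ∃ α > 0, ∀ v ∈ Z, α * ‖v‖ ^ 2 ≤ (⟪v, Q v⟫_ℂ).re

def IsMaximalUniformlyPositive (Q : W →L[ℂ] W) (Z : Submodule ℂ W) : Prop :=
  IsUniformlyPositive Q Z ∧ ∀ Z', IsUniformlyPositive Q Z' → Z ≤ Z' → Z' = Z

theorem isUniformlyPositive_neg_iff {Q : W →L[ℂ] W} {Z : Submodule ℂ W} :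
    IsUniformlyPositive (-Q) Z ↔ ∃ α > 0, ∀ v ∈ Z, (⟪v, Q v⟫_ℂ).re ≤ -α * ‖v‖ ^ 2 := by
  simp only [IsUniformlyPositive, neg_apply, inner_neg_right, Complex.neg_re, neg_mul, le_neg]

theorem inf_eq_bot_of_isUniformlyPositive_neg {Q : W →L[ℂ] W} {Z₁ Z₂ : Submodule ℂ W}
    (h₁ : IsUniformlyPositive Q Z₁) (h₂ : IsUniformlyPositive (-Q) Z₂) : Z₁ ⊓ Z₂ = ⊥ := by
  obtain ⟨α₁, hα₁, h₁⟩ := h₁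
  obtain ⟨α₂, hα₂, h₂⟩ := isUniformlyPositive_neg_iff.1 h₂
  refine (Submodule.eq_bot_iff _).2 fun v hv =>
    eq_zero_of_mul_norm_sq_nonpos (add_pos hα₁ hα₂) ?_
  linarith [(h₁ v hv.1).trans (h₂ v hv.2)]

/-- `(v | v)_S`, the square of the compatible norm attached to the involution `S`. -/
noncomputable def sNormSq (Q S : W →L[ℂ] W) (v : W) : ℝ :=
  (⟪v, (Q * S) v⟫_ℂ).re

/-- `S` is an admissible involution for the Krein space `(W, Q)`: a `Q`-unitary involution whose
form `⟪v, (Q * S) w⟫` is a compatible scalar product. -/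
structure IsAdmissible (Q S : W →L[ℂ] W) : Prop where
  mul_self : S * S = 1
  inner_map_map : ∀ v w, ⟪S v, Q (S w)⟫_ℂ = ⟪v, Q w⟫_ℂ
  isSymmetric : (Q * S).IsSymmetric
  coercive : ∃ c > 0, ∀ v, c * ‖v‖ ^ 2 ≤ sNormSq Q S v

/-- `posProj S` projects onto the `1`-eigenspace of the involution `S`, and `posProj (-S)` onto
its `-1`-eigenspace. -/
noncomputable def posProj (S : W →L[ℂ] W) : W →L[ℂ] W :=
  (2⁻¹ : ℂ) • (1 + S)

variable {Q S : W →L[ℂ] W}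

theorem posProj_add_posProj_neg (S : W →L[ℂ] W) (v : W) : posProj S v + posProj (-S) v = v := by
  simp only [posProj, smul_apply, add_apply, one_apply_eq_self, neg_apply, ← smul_add]
  rw [add_add_add_comm, add_neg_cancel, add_zero, ← two_smul ℂ v, smul_smul,
    inv_mul_cancel₀ two_ne_zero, one_smul]

theorem apply_posProj (hS : S * S = 1) (v : W) : S (posProj S v) = posProj S v := by
  have hSS : S (S v) = v := by rw [← mul_apply_eq_comp, hS, one_apply_eq_self]
  simp only [posProj, smul_apply, add_apply, one_apply_eq_self, map_smul, map_add, hSS, add_comm]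

theorem apply_posProj_neg (hS : S * S = 1) (v : W) : S (posProj (-S) v) = -posProj (-S) v := by
  have h := apply_posProj (S := -S) (by rwa [neg_mul_neg]) v
  rwa [neg_apply, neg_eq_iff_eq_neg] at h

theorem posProj_of_apply_eq {a : W} (ha : S a = a) : posProj S a = a := by
  simp only [posProj, smul_apply, add_apply, one_apply_eq_self, ha, ← two_smul ℂ a, smul_smul,
    inv_mul_cancel₀ (two_ne_zero (α := ℂ)), one_smul]

theorem inner_apply_eq_zero_of_apply_eq (hpres : ∀ v w, ⟪S v, Q (S w)⟫_ℂ = ⟪v, Q w⟫_ℂ) {a b : W}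
    (ha : S a = a) (hb : S b = -b) : ⟪a, Q b⟫_ℂ = 0 ∧ ⟪b, Q a⟫_ℂ = 0 := by
  have h₁ := hpres a b
  have h₂ := hpres b a
  rw [ha, hb, map_neg, inner_neg_right] at h₁
  rw [ha, hb, inner_neg_left] at h₂
  exact ⟨self_eq_neg.1 h₁.symm, self_eq_neg.1 h₂.symm⟩

theorem sNormSq_add (hpres : ∀ v w, ⟪S v, Q (S w)⟫_ℂ = ⟪v, Q w⟫_ℂ) {a b : W}
    (ha : S a = a) (hb : S b = -b) : sNormSq Q S (a + b) = sNormSq Q S a + sNormSq Q S b := by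
  obtain ⟨hab, hba⟩ := inner_apply_eq_zero_of_apply_eq hpres ha hb
  simp only [sNormSq, mul_apply_eq_comp, map_add, ha, hb, map_neg, inner_add_left,
    inner_add_right, inner_neg_right, hab, hba, add_zero, zero_add, Complex.add_re]

theorem re_inner_add_apply_add (hpres : ∀ v w, ⟪S v, Q (S w)⟫_ℂ = ⟪v, Q w⟫_ℂ) {a b : W}
    (ha : S a = a) (hb : S b = -b) :
    (⟪a + b, Q (a + b)⟫_ℂ).re = sNormSq Q S a - sNormSq Q S b := by
  obtain ⟨hab, hba⟩ := inner_apply_eq_zero_of_apply_eq hpres ha hb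
  simp only [sNormSq, mul_apply_eq_comp, map_add, ha, hb, map_neg, inner_add_left,
    inner_add_right, inner_neg_right, hab, hba, add_zero, zero_add, Complex.add_re,
    Complex.neg_re, sub_neg_eq_add]

theorem sNormSq_eq_add (hS : S * S = 1) (hpres : ∀ v w, ⟪S v, Q (S w)⟫_ℂ = ⟪v, Q w⟫_ℂ) (v : W) :
    sNormSq Q S v = sNormSq Q S (posProj S v) + sNormSq Q S (posProj (-S) v) := by
  conv_lhs => rw [← posProj_add_posProj_neg S v]
  exact sNormSq_add hpres (apply_posProj hS v) (apply_posProj_neg hS v)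

theorem re_inner_apply_eq_sub (hS : S * S = 1) (hpres : ∀ v w, ⟪S v, Q (S w)⟫_ℂ = ⟪v, Q w⟫_ℂ)
    (v : W) : (⟪v, Q v⟫_ℂ).re = sNormSq Q S (posProj S v) - sNormSq Q S (posProj (-S) v) := by
  conv_lhs => rw [← posProj_add_posProj_neg S v]
  exact re_inner_add_apply_add hpres (apply_posProj hS v) (apply_posProj_neg hS v)

theorem sNormSq_le (Q S : W →L[ℂ] W) (v : W) : sNormSq Q S v ≤ ‖Q * S‖ * ‖v‖ ^ 2 :=
  calc sNormSq Q S v ≤ ‖v‖ * ‖(Q * S) v‖ := re_inner_le_norm (𝕜 := ℂ) _ _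
    _ ≤ ‖v‖ * (‖Q * S‖ * ‖v‖) := by gcongr; exact (Q * S).le_opNorm v
    _ = ‖Q * S‖ * ‖v‖ ^ 2 := by ring

@[simp]
theorem sNormSq_neg_neg (v : W) : sNormSq (-Q) (-S) v = sNormSq Q S v := by
  simp [sNormSq]

theorem sNormSq_add_of_inner_eq_zero (hT : (Q * S).IsSymmetric) {x y : W}
    (h : ⟪x, (Q * S) y⟫_ℂ = 0) : sNormSq Q S (x + y) = sNormSq Q S x + sNormSq Q S y := by
  have h' : ⟪y, (Q * S) x⟫_ℂ = 0 := by
    rw [← inner_conj_symm, show ⟪(Q * S) x, y⟫_ℂ = ⟪x, (Q * S) y⟫_ℂ from hT x y, h, map_zero]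
  simp only [sNormSq, map_add, inner_add_left, inner_add_right, h, h', add_zero, zero_add,
    Complex.add_re]

theorem IsAdmissible.neg (hQS : IsAdmissible Q S) : IsAdmissible (-Q) (-S) where
  mul_self := by rw [neg_mul_neg]; exact hQS.mul_self
  inner_map_map v w := by simpa using hQS.inner_map_map v w
  isSymmetric := by rw [neg_mul_neg]; exact hQS.isSymmetric
  coercive := by simpa using hQS.coercive

theorem IsAdmissible.sNormSq_nonneg (hQS : IsAdmissible Q S) (v : W) : 0 ≤ sNormSq Q S v := by
  obtain ⟨c, hc, hcoer⟩ := hQS.coercive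
  exact (by positivity : 0 ≤ c * ‖v‖ ^ 2).trans (hcoer v)

variable {Z : Submodule ℂ W}

theorem IsMaximalUniformlyPositive.isClosed (hZ : IsMaximalUniformlyPositive Q Z) :
    IsClosed (Z : Set W) := by
  obtain ⟨⟨α, hα, hZα⟩, hmax⟩ := hZ
  have hcl : IsClosed {v : W | α * ‖v‖ ^ 2 ≤ (⟪v, Q v⟫_ℂ).re} :=
    isClosed_le (by fun_prop) (Complex.continuous_re.comp (continuous_id.inner Q.continuous))
  rw [← hmax _ ⟨α, hα, fun v hv => closure_minimal hZα hcl hv⟩ Z.le_topologicalClosure]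
  exact Z.isClosed_topologicalClosure

theorem IsUniformlyPositive.exists_antilipschitzWith_posProj (hQS : IsAdmissible Q S)
    (hZ : IsUniformlyPositive Q Z) :
    ∃ β, AntilipschitzWith β ((posProj S).comp Z.subtypeL) := by
  obtain ⟨α, hα, hZα⟩ := hZ
  refine ⟨⟨√(‖Q * S‖ / α), Real.sqrt_nonneg _⟩,
    ContinuousLinearMap.antilipschitz_of_bound _ fun v => norm_le_sqrt_mul_of_mul_sq_le hα ?_⟩
  calc α * ‖(v : W)‖ ^ 2 ≤ (⟪(v : W), Q v⟫_ℂ).re := hZα v v.2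
    _ = sNormSq Q S (posProj S v) - sNormSq Q S (posProj (-S) v) :=
      re_inner_apply_eq_sub hQS.mul_self hQS.inner_map_map v
    _ ≤ sNormSq Q S (posProj S v) := sub_le_self _ (hQS.sNormSq_nonneg _)
    _ ≤ ‖Q * S‖ * ‖posProj S v‖ ^ 2 := sNormSq_le Q S _

theorem IsUniformlyPositive.exists_sNormSq_posProj_neg_le (hQS : IsAdmissible Q S)
    (hZ : IsUniformlyPositive Q Z) : ∃ k, 0 ≤ k ∧ k < 1 ∧
      ∀ v ∈ Z, sNormSq Q S (posProj (-S) v) ≤ k * sNormSq Q S (posProj S v) := by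
  obtain ⟨α, hα, hZα⟩ := hZ
  have hC := norm_nonneg (Q * S)
  refine ⟨‖Q * S‖ / (‖Q * S‖ + α), div_nonneg hC (by linarith),
    (div_lt_one (by linarith)).2 (by linarith), fun v hv => ?_⟩
  have hκ := re_inner_apply_eq_sub hQS.mul_self hQS.inner_map_map v
  have hq := sNormSq_eq_add hQS.mul_self hQS.inner_map_map v
  rw [div_mul_eq_mul_div, le_div_iff₀ (by linarith)]
  nlinarith [mul_le_mul_of_nonneg_left (hZα v hv) hC,
    mul_le_mul_of_nonneg_left (sNormSq_le Q S v) hα.le, hQS.sNormSq_nonneg (posProj S v)]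

theorem IsMaximalUniformlyPositive.isClosed_map_posProj [CompleteSpace W] (hQS : IsAdmissible Q S)
    (hZ : IsMaximalUniformlyPositive Q Z) : IsClosed (Z.map (posProj S : W →ₗ[ℂ] W) : Set W) := by
  obtain ⟨β, hβ⟩ := hZ.1.exists_antilipschitzWith_posProj hQS
  have : CompleteSpace Z := hZ.isClosed.completeSpace_coe
  convert hβ.isClosed_range (ContinuousLinearMap.uniformContinuous _)
  ext
  simp

theorem IsUniformlyPositive.sup_span_singleton (hQS : IsAdmissible Q S)
    (hZ : IsUniformlyPositive Q Z) {w : W} (hw : S w = w)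
    (horth : ∀ v ∈ Z, ⟪posProj S v, (Q * S) w⟫_ℂ = 0) : IsUniformlyPositive Q (Z ⊔ ℂ ∙ w) := by
  obtain ⟨α, hα, hZα⟩ := hZ
  obtain ⟨c, hc, hcoer⟩ := hQS.coercive
  refine ⟨min α c / 2, by positivity, fun x hx => ?_⟩
  obtain ⟨v, hv, _, hy, rfl⟩ := Submodule.mem_sup.1 hx
  obtain ⟨t, rfl⟩ := Submodule.mem_span_singleton.1 hy
  have hsplit : v + t • w = (posProj S v + t • w) + posProj (-S) v := by
    conv_lhs => rw [← posProj_add_posProj_neg S v]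
    abel
  have hSplus : S (posProj S v + t • w) = posProj S v + t • w := by
    rw [map_add, map_smul, apply_posProj hQS.mul_self, hw]
  have hre : (⟪v + t • w, Q (v + t • w)⟫_ℂ).re = (⟪v, Q v⟫_ℂ).re + sNormSq Q S (t • w) := by
    rw [hsplit, re_inner_add_apply_add hQS.inner_map_map hSplus (apply_posProj_neg hQS.mul_self v),
      sNormSq_add_of_inner_eq_zero hQS.isSymmetric
        (by rw [map_smul, inner_smul_right, horth v hv, mul_zero]),
      re_inner_apply_eq_sub hQS.mul_self hQS.inner_map_map v]
    ring
  have hnorm : ‖v + t • w‖ ^ 2 ≤ 2 * (‖v‖ ^ 2 + ‖t • w‖ ^ 2) := by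
    nlinarith [parallelogram_law_with_norm ℂ v (t • w), sq_nonneg ‖v - t • w‖]
  have hm : 0 ≤ min α c := le_min hα.le hc.le
  rw [hre]
  calc min α c / 2 * ‖v + t • w‖ ^ 2 ≤ min α c * ‖v‖ ^ 2 + min α c * ‖t • w‖ ^ 2 := by
        nlinarith [mul_le_mul_of_nonneg_left hnorm hm]
    _ ≤ α * ‖v‖ ^ 2 + c * ‖t • w‖ ^ 2 := by gcongr <;> simp
    _ ≤ (⟪v, Q v⟫_ℂ).re + sNormSq Q S (t • w) := add_le_add (hZα v hv) (hcoer _)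

theorem IsMaximalUniformlyPositive.posProj_mem_map [CompleteSpace W] (hQS : IsAdmissible Q S)
    (hZ : IsMaximalUniformlyPositive Q Z) (w : W) :
    posProj S w ∈ Z.map (posProj S : W →ₗ[ℂ] W) := by
  by_contra hw
  obtain ⟨c, hc, hcoer⟩ := hQS.coercive
  have hK : ∀ x, x ∈ (S - 1 : W →L[ℂ] W).ker ↔ S x = x := by simp [sub_eq_zero]
  have hMK : Z.map (posProj S : W →ₗ[ℂ] W) < (S - 1 : W →L[ℂ] W).ker := by
    refine lt_of_le_of_ne ?_ fun h => hw (h ▸ (hK _).2 (apply_posProj hQS.mul_self w))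
    rintro _ ⟨v, -, rfl⟩
    exact (hK _).2 (apply_posProj hQS.mul_self v)
  obtain ⟨w₀, hw₀K, hw₀, horth⟩ := exists_ne_zero_forall_inner_apply_eq_zero (Q * S)
    (S - 1).isClosed_ker (hZ.isClosed_map_posProj hQS) hMK hc fun x _ => hcoer x
  have hw₀Z : w₀ ∈ Z := by
    rw [← hZ.2 _ (hZ.1.sup_span_singleton hQS ((hK _).1 hw₀K) fun v hv => horth _ ⟨v, hv, rfl⟩)
      le_sup_left]
    exact Submodule.mem_sup_right (Submodule.mem_span_singleton_self w₀)
  have h := hcoer w₀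
  rw [sNormSq, horth w₀ ⟨w₀, hw₀Z, posProj_of_apply_eq ((hK _).1 hw₀K)⟩, Complex.zero_re] at h
  exact hw₀ (eq_zero_of_mul_norm_sq_nonpos hc h)

theorem IsMaximalUniformlyPositive.exists_graph [CompleteSpace W] (hQS : IsAdmissible Q S)
    (hZ : IsMaximalUniformlyPositive Q Z) : ∃ k, 0 ≤ k ∧ k < 1 ∧ ∃ K : W →ₗ[ℂ] W, ∀ w,
      posProj S w + K w ∈ Z ∧ S (K w) = -K w ∧
        sNormSq Q S (K w) ≤ k * sNormSq Q S (posProj S w) := by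
  obtain ⟨k, hk₀, hk₁, hk⟩ := hZ.1.exists_sNormSq_posProj_neg_le hQS
  obtain ⟨β, hβ⟩ := hZ.1.exists_antilipschitzWith_posProj hQS
  obtain ⟨f, hf⟩ := LinearMap.exists_comp_eq_of_injective hβ.injective (posProj S : W →ₗ[ℂ] W)
    fun w => by
      obtain ⟨v, hv, hvw⟩ := hZ.posProj_mem_map hQS w
      exact ⟨⟨v, hv⟩, hvw⟩
  have hfw : ∀ w, posProj S (f w) = posProj S w := LinearMap.congr_fun hf
  refine ⟨k, hk₀, hk₁, (posProj (-S) : W →ₗ[ℂ] W) ∘ₗ Z.subtype ∘ₗ f, fun w =>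
    ⟨?_, apply_posProj_neg hQS.mul_self _, ?_⟩⟩
  · have h := posProj_add_posProj_neg S (f w)
    rw [hfw] at h
    simp [h]
  · simpa [hfw] using hk _ (f w).2

theorem sup_eq_top_of_isMaximalUniformlyPositive [CompleteSpace W] (hQS : IsAdmissible Q S)
    {Z₁ Z₂ : Submodule ℂ W} (h₁ : IsMaximalUniformlyPositive Q Z₁)
    (h₂ : IsMaximalUniformlyPositive (-Q) Z₂) : Z₁ ⊔ Z₂ = ⊤ := by
  obtain ⟨k₁, hk₁₀, hk₁, K₁, hK₁⟩ := h₁.exists_graph hQS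
  obtain ⟨k₂, hk₂₀, hk₂, K₂, hK₂⟩ := h₂.exists_graph hQS.neg
  obtain ⟨c, hc, hcoer⟩ := hQS.coercive
  have hN : ∀ w, sNormSq Q S ((K₁ + K₂) w) ≤ max k₁ k₂ * sNormSq Q S w := by
    intro w
    have hK₂S : S (K₂ w) = K₂ w := by simpa using (hK₂ w).2.1
    have hK₂w : sNormSq Q S (K₂ w) ≤ k₂ * sNormSq Q S (posProj (-S) w) := by
      simpa using (hK₂ w).2.2
    rw [LinearMap.add_apply, add_comm, sNormSq_add hQS.inner_map_map hK₂S (hK₁ w).2.1,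
      sNormSq_eq_add hQS.mul_self hQS.inner_map_map w]
    linarith [(hK₁ w).2.2, mul_le_mul_of_nonneg_right (le_max_left k₁ k₂)
      (hQS.sNormSq_nonneg (posProj S w)), mul_le_mul_of_nonneg_right (le_max_right k₁ k₂)
      (hQS.sNormSq_nonneg (posProj (-S) w))]
  refine eq_top_iff.2 fun w _ => ?_
  obtain ⟨x, rfl⟩ := LinearMap.surjective_one_add_of_forall_le_mul hc (le_max_of_le_left hk₁₀)
    (max_lt hk₁ hk₂) hcoer (sNormSq_le Q S) _ hN w
  have hx : (1 + (K₁ + K₂)) x = (posProj S x + K₁ x) + (posProj (-S) x + K₂ x) := by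
    rw [LinearMap.add_apply, LinearMap.add_apply, Module.End.one_apply]
    nth_rewrite 1 [← posProj_add_posProj_neg S x]
    abel
  rw [hx]
  exact Submodule.add_mem_sup (hK₁ x).1 (hK₂ x).1

end Krein

theorem stmt14_general {W : Type*} [NormedAddCommGroup W] [InnerProductSpace ℂ W] [CompleteSpace W]
    (Q S : W →L[ℂ] W) (hS : S * S = 1)
    (hpres : ∀ v w : W, (inner ℂ (S v) (Q (S w)) : ℂ) = inner ℂ v (Q w))
    (hpos : (Q * S).IsPositive)
    (hbdd : ∃ c > 0, ∀ v : W, c * ‖v‖ ^ 2 ≤ ((inner ℂ v ((Q * S) v) : ℂ)).re)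
    (Z₁ Z₂ : Submodule ℂ W)
    (hZ₁pos : ∃ α > 0, ∀ v ∈ Z₁, α * ‖v‖ ^ 2 ≤ ((inner ℂ v (Q v) : ℂ)).re)
    (hZ₁max : ∀ Z' : Submodule ℂ W,
      (∃ α > 0, ∀ v ∈ Z', α * ‖v‖ ^ 2 ≤ ((inner ℂ v (Q v) : ℂ)).re) → Z₁ ≤ Z' → Z' = Z₁)
    (hZ₂neg : ∃ α > 0, ∀ v ∈ Z₂, ((inner ℂ v (Q v) : ℂ)).re ≤ -α * ‖v‖ ^ 2)
    (hZ₂max : ∀ Z' : Submodule ℂ W,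
      (∃ α > 0, ∀ v ∈ Z', ((inner ℂ v (Q v) : ℂ)).re ≤ -α * ‖v‖ ^ 2) → Z₂ ≤ Z' → Z' = Z₂) :
    Z₁ ⊓ Z₂ = ⊥ ∧ Z₁ ⊔ Z₂ = ⊤ := by
  have hQS : Krein.IsAdmissible Q S := ⟨hS, hpres, hpos.isSymmetric, hbdd⟩
  have hZ₂ : Krein.IsUniformlyPositive (-Q) Z₂ := Krein.isUniformlyPositive_neg_iff.2 hZ₂neg
  exact ⟨Krein.inf_eq_bot_of_isUniformlyPositive_neg hZ₁pos hZ₂,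
    Krein.sup_eq_top_of_isMaximalUniformlyPositive hQS ⟨hZ₁pos, hZ₁max⟩
      ⟨hZ₂, fun Z' hZ' => hZ₂max Z' (Krein.isUniformlyPositive_neg_iff.1 hZ')⟩⟩

/-- In a Krein space (W,Q), a maximal uniformly positive subspace Z₁ and a maximal
uniformly negative subspace Z₂ are complementary. -/
theorem stmt14 {W : Type*} [NormedAddCommGroup W] [InnerProductSpace ℂ W] [CompleteSpace W]
    (Q S : W →L[ℂ] W) (hQ : IsSelfAdjoint Q) (hS : S * S = 1)
    (hpres : ∀ v w : W, (inner ℂ (S v) (Q (S w)) : ℂ) = inner ℂ v (Q w))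
    (hpos : (Q * S).IsPositive)
    (hbdd : ∃ c > 0, ∀ v : W, c * ‖v‖ ^ 2 ≤ ((inner ℂ v ((Q * S) v) : ℂ)).re)
    (Z₁ Z₂ : Submodule ℂ W)
    (hZ₁pos : ∃ α > 0, ∀ v ∈ Z₁, α * ‖v‖ ^ 2 ≤ ((inner ℂ v (Q v) : ℂ)).re)
    (hZ₁max : ∀ Z' : Submodule ℂ W,
      (∃ α > 0, ∀ v ∈ Z', α * ‖v‖ ^ 2 ≤ ((inner ℂ v (Q v) : ℂ)).re) → Z₁ ≤ Z' → Z' = Z₁)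
    (hZ₂neg : ∃ α > 0, ∀ v ∈ Z₂, ((inner ℂ v (Q v) : ℂ)).re ≤ -α * ‖v‖ ^ 2)
    (hZ₂max : ∀ Z' : Submodule ℂ W,
      (∃ α > 0, ∀ v ∈ Z', ((inner ℂ v (Q v) : ℂ)).re ≤ -α * ‖v‖ ^ 2) → Z₂ ≤ Z' → Z' = Z₂) :
    Z₁ ⊓ Z₂ = ⊥ ∧ Z₁ ⊔ Z₂ = ⊤ :=
  stmt14_general Q S hS hpres hpos hbdd Z₁ Z₂ hZ₁pos hZ₁max hZ₂neg hZ₂max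
end
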